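/- arXiv:1501.01778 — 2 statements merged into one kernel-verified Lean document; each statement's English description precedes it below -/
import Mathlib

section
/- In the algebra f, for every integer m with 0 ≤ m ≤ N, one has θ_j θ_i^{(m)} = Σ_{p=0}^{m} v^{(p−N)(m−p)} θ_i^{(m−p)} f(i,j;p). -/
noncomputable section

open Finset

/-- The base field `K = ℚ(v)`. -/
abbrev K : Type := RatFunc ℚ

/-- The variable `v`. -/
def v : K := RatFunc.X

/-- The balanced quantum integer `[n]_v = (v^n - v^{-n})/(v - v^{-1})`. -/
def qnum (n : ℕ) : K := (v ^ (n : ℤ) - v ^ (-(n : ℤ))) / (v - v⁻¹)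

/-- The quantum factorial `[n]_v!`. -/
def qfac : ℕ → K
  | 0 => 1
  | n + 1 => qfac n * qnum (n + 1)

/-- Divided power `x^{(n)} = x^n/[n]_v!` in the free algebra. -/
def fdp (x : FreeAlgebra K (Fin 2)) (n : ℕ) : FreeAlgebra K (Fin 2) :=
  (qfac n)⁻¹ • x ^ n

/-- The generator `θ_i` in the free algebra. -/
def θi' : FreeAlgebra K (Fin 2) := FreeAlgebra.ι K 0

/-- The generator `θ_j` in the free algebra. -/
def θj' : FreeAlgebra K (Fin 2) := FreeAlgebra.ι K 1

/-- The two quantum Serre relations defining Lusztig's algebra `f` for the quiver with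
two vertices `i, j` and `N` arrows from `j` to `i` (so `a_{ij} = a_{ji} = -N`). -/
inductive SerreRel (N : ℕ) : FreeAlgebra K (Fin 2) → FreeAlgebra K (Fin 2) → Prop
  | serre_i : SerreRel N
      (∑ k ∈ range (N + 2), ((-1 : K) ^ k) • (fdp θi' k * θj' * fdp θi' (N + 1 - k))) 0
  | serre_j : SerreRel N
      (∑ k ∈ range (N + 2), ((-1 : K) ^ k) • (fdp θj' k * θi' * fdp θj' (N + 1 - k))) 0

/-- Lusztig's algebra `f`. -/
def LusztigF (N : ℕ) : Type := RingQuot (SerreRel N)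

instance (N : ℕ) : Ring (LusztigF N) := inferInstanceAs (Ring (RingQuot (SerreRel N)))
instance (N : ℕ) : Algebra K (LusztigF N) := inferInstanceAs (Algebra K (RingQuot (SerreRel N)))

/-- The generator `θ_i` of `f`. -/
def θi (N : ℕ) : LusztigF N := RingQuot.mkAlgHom K (SerreRel N) θi'

/-- The generator `θ_j` of `f`. -/
def θj (N : ℕ) : LusztigF N := RingQuot.mkAlgHom K (SerreRel N) θj'

/-- Divided power `x^{(n)} = x^n/[n]_v!` in `f`. -/
def dp {N : ℕ} (x : LusztigF N) (n : ℕ) : LusztigF N := (qfac n)⁻¹ • x ^ n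

/-- The element `f(i,j;m) = Σ_{r+s=m} (-1)^r v^{-r(N-m+1)} θ_i^{(r)} θ_j θ_i^{(s)}`. -/
def fm (N m : ℕ) : LusztigF N :=
  ∑ r ∈ range (m + 1),
    ((-1 : K) ^ r * v ^ (-(r : ℤ) * ((N : ℤ) - (m : ℤ) + 1))) •
      (dp (θi N) r * θj N * dp (θi N) (m - r))

/-!
The identity already holds in the free algebra, i.e. for arbitrary elements `x, y` of any
`K`-algebra in place of `θ_i, θ_j`. Expanding the right-hand side, the coefficient of `x^(m-b) y x^b` is
`v^((b-N)(m-b)) / [b]!` times `Σ_r (-1)^r v^(r(a-1)) / ([r]! [a-r]!)` with `a = m - b`. After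
multiplying by `[a]!` this is an alternating sum `S a` of balanced Gaussian binomials, and the
`v`-Pascal rule gives `S (a+1) = (1 - v^(2a)) S a`, so `S a = 0` for `a > 0`. Only `b = m` survives.
-/

lemma v_ne_zero : v ≠ 0 := RatFunc.X_ne_zero

lemma v_pow_ne_one {n : ℕ} (hn : n ≠ 0) : v ^ n ≠ 1 := by
  intro h
  have h' : algebraMap (Polynomial ℚ) K (Polynomial.X ^ n) = algebraMap (Polynomial ℚ) K 1 := by
    simpa [RatFunc.algebraMap_X, v] using h
  simpa [hn] using congrArg Polynomial.natDegree (RatFunc.algebraMap_injective ℚ h')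

lemma v_zpow_ne_one {k : ℤ} (hk : k ≠ 0) : v ^ k ≠ 1 := by
  obtain ⟨n, rfl | rfl⟩ := Int.eq_nat_or_neg k
  · simpa using v_pow_ne_one (n := n) (by omega)
  · simpa using v_pow_ne_one (n := n) (by omega)

lemma v_zpow_sub_zpow_neg_ne_zero {k : ℤ} (hk : k ≠ 0) : v ^ k - v ^ (-k) ≠ 0 := by
  intro h
  apply v_zpow_ne_one (k := k - -k) (by omega)
  rw [zpow_sub₀ v_ne_zero, sub_eq_zero.mp h, div_self (zpow_ne_zero _ v_ne_zero)]

lemma v_sub_v_inv_ne_zero : v - v⁻¹ ≠ 0 := by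
  simpa using v_zpow_sub_zpow_neg_ne_zero (k := 1) one_ne_zero

lemma qnum_ne_zero {n : ℕ} (hn : n ≠ 0) : qnum n ≠ 0 :=
  div_ne_zero (v_zpow_sub_zpow_neg_ne_zero (by omega)) v_sub_v_inv_ne_zero

lemma qfac_ne_zero (n : ℕ) : qfac n ≠ 0 := by
  induction n with
  | zero => exact one_ne_zero
  | succ n ih => exact mul_ne_zero ih (qnum_ne_zero n.succ_ne_zero)

lemma qnum_add (r s : ℕ) : qnum (r + s) = v ^ (s : ℤ) * qnum r + v ^ (-(r : ℤ)) * qnum s := by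
  simp only [qnum, Nat.cast_add, neg_add, zpow_add₀ v_ne_zero, zpow_neg]
  ring

/-- The balanced Gaussian binomial coefficient, via the `v`-Pascal rule. -/
def qbinom : ℕ → ℕ → K
  | _, 0 => 1
  | 0, _ + 1 => 0
  | a + 1, r + 1 => v ^ ((a : ℤ) - r) * qbinom a r + v ^ (-(r : ℤ) - 1) * qbinom a (r + 1)

@[simp]
lemma qbinom_zero_right (a : ℕ) : qbinom a 0 = 1 := by
  cases a <;> rfl

lemma qbinom_succ_succ (a r : ℕ) :
    qbinom (a + 1) (r + 1) =
      v ^ ((a : ℤ) - r) * qbinom a r + v ^ (-(r : ℤ) - 1) * qbinom a (r + 1) := rfl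

lemma qfac_succ (n : ℕ) : qfac (n + 1) = qfac n * qnum (n + 1) := rfl

lemma qbinom_eq_zero_of_lt {a r : ℕ} (h : a < r) : qbinom a r = 0 := by
  induction a generalizing r with
  | zero => obtain ⟨r, rfl⟩ := Nat.exists_eq_add_one_of_ne_zero (by omega : r ≠ 0); rfl
  | succ a ih =>
    obtain ⟨r, rfl⟩ := Nat.exists_eq_add_one_of_ne_zero (by omega : r ≠ 0)
    rw [qbinom_succ_succ, ih (by omega), ih (by omega), mul_zero, mul_zero, add_zero]

lemma qbinom_mul_qfac_mul_qfac {a r : ℕ} (h : r ≤ a) :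
    qbinom a r * (qfac r * qfac (a - r)) = qfac a := by
  induction a generalizing r with
  | zero =>
    obtain rfl : r = 0 := by omega
    simp [qfac]
  | succ a ih =>
    rcases r with _ | r
    · simp [qfac]
    have left : qbinom a r * (qfac (r + 1) * qfac (a - r)) = qnum (r + 1) * qfac a := by
      rw [← ih (by omega : r ≤ a), qfac_succ]; ring
    -- for `r = a` both sides vanish, as `qbinom a (a + 1) = 0 = qnum 0`
    have right : qbinom a (r + 1) * (qfac (r + 1) * qfac (a - r)) = qnum (a - r) * qfac a := by
      rcases (by omega : r = a ∨ r + 1 ≤ a) with rfl | hr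
      · simp [qbinom_eq_zero_of_lt, qnum]
      · obtain ⟨s, hs⟩ : ∃ s, a - r = s + 1 := ⟨a - (r + 1), by omega⟩
        rw [← ih hr, hs, qfac_succ s, show a - (r + 1) = s by omega]; ring
    have pascal :
        qnum (a + 1) = v ^ ((a : ℤ) - r) * qnum (r + 1) + v ^ (-(r : ℤ) - 1) * qnum (a - r) := by
      have := qnum_add (r + 1) (a - r)
      rw [show r + 1 + (a - r) = a + 1 by omega] at this
      convert this using 4 <;> push_cast [Nat.cast_sub (by omega : r ≤ a)] <;> ring
    rw [Nat.add_sub_add_right, qbinom_succ_succ, qfac_succ a, pascal]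
    linear_combination v ^ ((a : ℤ) - r) * left + v ^ (-(r : ℤ) - 1) * right

def qbinomAltSum (a : ℕ) : K :=
  ∑ r ∈ range (a + 1), (-1 : K) ^ r * v ^ ((r : ℤ) * ((a : ℤ) - 1)) * qbinom a r

lemma qbinomAltSum_succ (a : ℕ) :
    qbinomAltSum (a + 1) = (1 - v ^ (2 * (a : ℤ))) * qbinomAltSum a := by
  set u : ℕ → K := fun r => (-1 : K) ^ r * v ^ ((r : ℤ) * ((a : ℤ) - 1)) * qbinom a r
  have term_succ : ∀ r, (-1 : K) ^ (r + 1) * v ^ (((r + 1 : ℕ) : ℤ) * (((a + 1 : ℕ) : ℤ) - 1)) *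
      qbinom (a + 1) (r + 1) = -(v ^ (2 * (a : ℤ)) * u r) + u (r + 1) := by
    intro r
    have e₁ : v ^ (((r + 1 : ℕ) : ℤ) * (((a + 1 : ℕ) : ℤ) - 1)) * v ^ ((a : ℤ) - r) =
        v ^ (2 * (a : ℤ)) * v ^ ((r : ℤ) * ((a : ℤ) - 1)) := by
      rw [← zpow_add₀ v_ne_zero, ← zpow_add₀ v_ne_zero]; push_cast; ring_nf
    have e₂ : v ^ (((r + 1 : ℕ) : ℤ) * (((a + 1 : ℕ) : ℤ) - 1)) * v ^ (-(r : ℤ) - 1) =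
        v ^ (((r + 1 : ℕ) : ℤ) * ((a : ℤ) - 1)) := by
      rw [← zpow_add₀ v_ne_zero]; push_cast; ring_nf
    simp only [u, qbinom_succ_succ]
    linear_combination (-1 : K) ^ (r + 1) * (qbinom a r * e₁ + qbinom a (r + 1) * e₂)
  have hS : qbinomAltSum a = ∑ r ∈ range (a + 1), u r := rfl
  have shifted : ∑ r ∈ range (a + 1), u (r + 1) = qbinomAltSum a - 1 := by
    have h := sum_range_succ' u (a + 1)
    rw [sum_range_succ, ← hS, show u (a + 1) = 0 by simp [u, qbinom_eq_zero_of_lt],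
      show u 0 = 1 by simp [u]] at h
    linear_combination -h
  rw [qbinomAltSum, sum_range_succ', sum_congr rfl fun r _ => term_succ r, sum_add_distrib, shifted,
    sum_neg_distrib, ← mul_sum, ← hS]
  simp only [pow_zero, Nat.cast_zero, zero_mul, zpow_zero, qbinom_zero_right]
  ring

lemma qbinomAltSum_eq_ite (a : ℕ) : qbinomAltSum a = if a = 0 then 1 else 0 := by
  induction a with
  | zero => simp [qbinomAltSum]
  | succ a ih =>
    rw [qbinomAltSum_succ, ih]
    rcases a with _ | a <;> simp

lemma sum_range_alternating_inv_qfac_mul_inv_qfac (a : ℕ) :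
    ∑ r ∈ range (a + 1), (-1 : K) ^ r * v ^ ((r : ℤ) * ((a : ℤ) - 1)) *
      ((qfac r)⁻¹ * (qfac (a - r))⁻¹) = if a = 0 then 1 else 0 := by
  have hterm : ∀ r ∈ range (a + 1), (-1 : K) ^ r * v ^ ((r : ℤ) * ((a : ℤ) - 1)) *
      ((qfac r)⁻¹ * (qfac (a - r))⁻¹) =
      (qfac a)⁻¹ * ((-1 : K) ^ r * v ^ ((r : ℤ) * ((a : ℤ) - 1)) * qbinom a r) := by
    intro r hr
    rw [eq_div_of_mul_eq (mul_ne_zero (qfac_ne_zero r) (qfac_ne_zero (a - r)))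
      (qbinom_mul_qfac_mul_qfac (Nat.lt_succ_iff.mp (mem_range.mp hr)))]
    field_simp [qfac_ne_zero a]
  rw [sum_congr rfl hterm, ← mul_sum, ← qbinomAltSum, qbinomAltSum_eq_ite]
  split_ifs with ha <;> simp [ha, qfac]

section Algebra

variable {A : Type*} [Ring A] [Algebra K A]

def divPow (x : A) (n : ℕ) : A := (qfac n)⁻¹ • x ^ n

/-- The element `f(i,j;m)` of `fm`, for arbitrary `x, y` in place of `θ_i, θ_j`. -/
def higherSerre (x y : A) (N : ℤ) (m : ℕ) : A :=
  ∑ r ∈ range (m + 1),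
    ((-1 : K) ^ r * v ^ (-(r : ℤ) * (N - (m : ℤ) + 1))) • (divPow x r * y * divPow x (m - r))

/-- The coefficient of `x^(m-b) y x^b` contributed by the `p = b + r`-th summand of the
right-hand side of `mul_divPow_eq_sum_smul_divPow_mul_higherSerre`. -/
def inversionCoeff (N : ℤ) (m b r : ℕ) : K :=
  v ^ (((b : ℤ) - N) * ((m : ℤ) - b)) * (qfac b)⁻¹ *
    ((-1 : K) ^ r * v ^ ((r : ℤ) * (((m - b : ℕ) : ℤ) - 1)) * ((qfac r)⁻¹ * (qfac (m - b - r))⁻¹))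

lemma smul_divPow_mul_higherSerre (x y : A) (N : ℤ) {m p : ℕ} (hp : p ≤ m) :
    v ^ (((p : ℤ) - N) * ((m : ℤ) - p)) • (divPow x (m - p) * higherSerre x y N p) =
      ∑ b ∈ range (p + 1), inversionCoeff N m b (p - b) • (x ^ (m - b) * y * x ^ b) := by
  rw [higherSerre, mul_sum, smul_sum, ← sum_range_reflect]
  refine sum_congr rfl fun b hb => ?_
  have hbp : b ≤ p := Nat.lt_succ_iff.mp (mem_range.mp hb)
  rw [show p + 1 - 1 - b = p - b by omega, show p - (p - b) = b by omega]
  simp only [divPow, smul_mul_assoc, mul_smul_comm, smul_smul, ← mul_assoc, ← pow_add]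
  rw [show m - p + (p - b) = m - b by omega]
  congr 1
  have hv : v ^ (((p : ℤ) - N) * ((m : ℤ) - p)) * v ^ (-((p - b : ℕ) : ℤ) * (N - (p : ℤ) + 1)) =
      v ^ (((b : ℤ) - N) * ((m : ℤ) - b)) * v ^ (((p - b : ℕ) : ℤ) * (((m - b : ℕ) : ℤ) - 1)) := by
    rw [← zpow_add₀ v_ne_zero, ← zpow_add₀ v_ne_zero]
    push_cast [Nat.cast_sub hbp, Nat.cast_sub (hbp.trans hp)]
    ring_nf
  rw [inversionCoeff, show m - b - (p - b) = m - p by omega]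
  linear_combination
    (-1 : K) ^ (p - b) * (qfac (m - p))⁻¹ * (qfac (p - b))⁻¹ * (qfac b)⁻¹ * hv

lemma sum_inversionCoeff (N : ℤ) {m b : ℕ} (hb : b ≤ m) :
    ∑ r ∈ range (m + 1 - b), inversionCoeff N m b r = if b = m then (qfac m)⁻¹ else 0 := by
  simp only [inversionCoeff]
  rw [← mul_sum, show m + 1 - b = m - b + 1 by omega,
    sum_range_alternating_inv_qfac_mul_inv_qfac]
  rcases eq_or_ne b m with rfl | hbm
  · simp
  · simp [hbm, show m - b ≠ 0 by omega]

theorem mul_divPow_eq_sum_smul_divPow_mul_higherSerre (x y : A) (N : ℤ) (m : ℕ) :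
    y * divPow x m =
      ∑ p ∈ range (m + 1),
        v ^ (((p : ℤ) - N) * ((m : ℤ) - p)) • (divPow x (m - p) * higherSerre x y N p) := by
  calc y * divPow x m
      = ∑ b ∈ range (m + 1),
          (∑ r ∈ range (m + 1 - b), inversionCoeff N m b r) • (x ^ (m - b) * y * x ^ b) := by
        rw [sum_eq_single_of_mem m (self_mem_range_succ m) fun b hb hbm => by
          rw [sum_inversionCoeff N (Nat.lt_succ_iff.mp (mem_range.mp hb)), if_neg hbm, zero_smul]]
        rw [sum_inversionCoeff N le_rfl, if_pos rfl, Nat.sub_self, pow_zero, one_mul, divPow,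
          mul_smul_comm]
    _ = ∑ p ∈ range (m + 1), ∑ b ∈ range (p + 1), inversionCoeff N m b (p - b) •
          (x ^ (m - b) * y * x ^ b) := by
        simp only [sum_smul]
        exact (sum_range_diag_flip (m + 1) fun b r => inversionCoeff N m b r • _).symm
    _ = _ := sum_congr rfl fun p hp =>
        (smul_divPow_mul_higherSerre x y N (Nat.lt_succ_iff.mp (mem_range.mp hp))).symm

end Algebra

theorem stmt0_general (N m : ℕ) :
    θj N * dp (θi N) m =
      ∑ p ∈ range (m + 1),
        v ^ (((p : ℤ) - (N : ℤ)) * ((m : ℤ) - (p : ℤ))) • (dp (θi N) (m - p) * fm N p) :=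
  mul_divPow_eq_sum_smul_divPow_mul_higherSerre (θi N) (θj N) N m

/-- In `f`, for `0 ≤ m ≤ N`:
`θ_j θ_i^{(m)} = Σ_{p=0}^{m} v^{(p-N)(m-p)} θ_i^{(m-p)} f(i,j;p)`. -/
theorem stmt0 (N m : ℕ) (hm : m ≤ N) :
    θj N * dp (θi N) m =
      ∑ p ∈ range (m + 1),
        v ^ (((p : ℤ) - (N : ℤ)) * ((m : ℤ) - (p : ℤ))) • (dp (θi N) (m - p) * fm N p) :=
  stmt0_general N m
end
end

section
/- Suppose A ⟶ A′ ⟶ A″ ⟶ A⟦1⟧ is a distinguished triangle in C, A admits an S-resolution of length s_A, and A″ admits an S-resolution of length s_{A″}. Then A′ admits an S-resolution of length s_A + s_{A″} + 1. -/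
open CategoryTheory CategoryTheory.Limits CategoryTheory.Pretriangulated

variable {C : Type*} [Category C] [Preadditive C] [HasZeroObject C] [HasShift C ℤ]
  [∀ n : ℤ, (shiftFunctor C n).Additive] [Pretriangulated C]

/-- `HasRes S X s` : the object `X` admits an `S`-resolution of length `s`, i.e. either
`s = 0` and `X ∈ S`, or `s ≥ 1` and there is a distinguished triangle
`X ⟶ G ⟶ Y ⟶ X⟦1⟧` with `G ∈ S` and `Y` admitting an `S`-resolution of length `s - 1`. -/
inductive HasRes (S : Set C) : C → ℕ → Prop
  | zero (X : C) (hX : X ∈ S) : HasRes S X 0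
  | succ (X : C) (s : ℕ) (G Y : C) (f : X ⟶ G) (g : G ⟶ Y) (h : Y ⟶ X⟦(1 : ℤ)⟧)
      (hT : Triangle.mk f g h ∈ distTriang C) (hG : G ∈ S) (hY : HasRes S Y s) :
      HasRes S X (s + 1)

lemma hasRes_shift (S : Set C)
    (hshift : ∀ (X : C) (n : ℤ), X ∈ S → X⟦n⟧ ∈ S)
    {X : C} {s : ℕ} (hX : HasRes S X s) (n : ℤ) : HasRes S (X⟦n⟧) s := by
  induction hX with
  | zero X hX => exact HasRes.zero _ (hshift X n hX)
  | succ X s G Y f g h hT hG hY ih =>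
    have hT' := Pretriangulated.Triangle.shift_distinguished (Triangle.mk f g h) hT n
    have h33 : ((CategoryTheory.shiftFunctor (Triangle C) n).obj (Triangle.mk f g h)) ∈
        distTriang C := hT'
    exact HasRes.succ (X⟦n⟧) s (G⟦n⟧) (Y⟦n⟧)
      (n.negOnePow • f⟦n⟧') (n.negOnePow • g⟦n⟧')
      (n.negOnePow • h⟦n⟧' ≫ (shiftFunctorComm C 1 n).hom.app X)
      h33 (hshift G n hG) ih

/-- Let `C` be triangulated (pretriangulated satisfying the octahedral axiom) and let `S` be a
class of objects closed under isomorphism and under all shifts.  If `A ⟶ A' ⟶ A'' ⟶ A⟦1⟧` is a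
distinguished triangle, `A` admits an `S`-resolution of length `s_A` and `A''` admits an
`S`-resolution of length `s_{A''}`, then `A'` admits an `S`-resolution of length
`s_A + s_{A''} + 1`. -/
theorem stmt5 [IsTriangulated C] (S : Set C)
    (hiso : ∀ ⦃X Y : C⦄, (X ≅ Y) → X ∈ S → Y ∈ S)
    (hshift : ∀ (X : C) (n : ℤ), X ∈ S → X⟦n⟧ ∈ S)
    (A A' A'' : C) (u : A ⟶ A') (w : A' ⟶ A'') (d : A'' ⟶ A⟦(1 : ℤ)⟧)
    (hT : Triangle.mk u w d ∈ distTriang C)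
    (sA sA'' : ℕ) (hA : HasRes S A sA) (hA'' : HasRes S A'' sA'') :
    HasRes S A' (sA + sA'' + 1) := by
  induction hA'' generalizing A A' u sA with
  | zero X hX =>
    have hrot : Triangle.mk w d (-u⟦(1 : ℤ)⟧') ∈ distTriang C :=
      rot_of_distTriang _ hT
    exact HasRes.succ A' sA X (A⟦(1 : ℤ)⟧) w d (-u⟦(1 : ℤ)⟧') hrot hX
      (hasRes_shift S hshift hA 1)
  | succ X s G Y f g h hT' hG hY ih =>
    obtain ⟨Z, π, δ, hZ⟩ := distinguished_cocone_triangle (w ≫ f)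
    have hrot : Triangle.mk w d (-u⟦(1 : ℤ)⟧') ∈ distTriang C :=
      rot_of_distTriang _ hT
    have oct := Triangulated.someOctahedron rfl hrot hT' hZ
    have hZres : HasRes S Z (sA + s + 1) :=
      ih (A⟦(1 : ℤ)⟧) Z oct.m₁ oct.m₃ _ oct.mem sA (hasRes_shift S hshift hA 1)
    exact HasRes.succ A' (sA + s + 1) G Z (w ≫ f) π δ hZ hG hZres
end
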